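/- arXiv:2403.18248 — 2 statements merged into one kernel-verified Lean document; each statement's English description precedes it below -/
import Mathlib

section
/- Plug-in regret bound: with p, p̂ : 𝒳 → [0,1], τ ∈ (0,1), δ := sup_x |p(x) − p̂(x)|, X a random variable in 𝒳, define γ(τ, p, R) := E[(1−τ)(1−p(X))] + E[(p(X) − (1−τ)) 1(X ∈ R)] and let R* = {x : p(x) > 1−τ}, R̂ = {x : p̂(x) > 1−τ}. Then 0 ≤ γ(τ, p, R*) − γ(τ, p, R̂) ≤ δ · P(1−τ − δ ≤ p(X) ≤ 1−τ + δ). -/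
/-!
Pointwise, the gain `(p - t) · 1(p > t)` of the oracle region dominates the gain
`(p - t) · 1(p̂ > t)` of the plug-in region, and the two differ only where the thresholds
disagree. Since `|p - p̂| ≤ δ`, that can happen only when `|p - t| ≤ δ`, and there the
difference is `|p - t| ≤ δ`. Integrating gives the bound; the baseline term of the welfare
cancels.
-/

open MeasureTheory

lemma sub_mul_indicator_regret_nonneg_and_le {𝒳 : Type*} {p q : 𝒳 → ℝ} {t δ : ℝ}
    (x : 𝒳) (hx : |p x - q x| ≤ δ) :
    0 ≤ (p x - t) * {x | p x > t}.indicator (fun _ => (1 : ℝ)) x -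
      (p x - t) * {x | q x > t}.indicator (fun _ => (1 : ℝ)) x ∧
    (p x - t) * {x | p x > t}.indicator (fun _ => (1 : ℝ)) x -
      (p x - t) * {x | q x > t}.indicator (fun _ => (1 : ℝ)) x ≤
      {x | t - δ ≤ p x ∧ p x ≤ t + δ}.indicator (fun _ => δ) x := by
  rw [abs_le] at hx
  simp only [Set.indicator_apply, Set.mem_ofPred_eq]
  split_ifs <;> grind

section ThresholdGain

variable {𝒳 Ω : Type*} [MeasurableSpace 𝒳] [MeasurableSpace Ω]
  (μ : Measure Ω) (X : Ω → 𝒳) (p : 𝒳 → ℝ) (t : ℝ)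

/-- The part of the welfare `γ(τ, p, R)` that depends on `R`, with threshold `t = 1 - τ`. -/
noncomputable def thresholdGain (R : Set 𝒳) : ℝ :=
  ∫ ω, (p (X ω) - t) * R.indicator (fun _ => (1 : ℝ)) (X ω) ∂μ

variable {μ X p}

lemma integrable_sub_mul_indicator [IsFiniteMeasure μ] (hX : Measurable X) (hp : Measurable p)
    {C : ℝ} (hpC : ∀ x, |p x| ≤ C) {R : Set 𝒳} (hR : MeasurableSet R) :
    Integrable (fun ω => (p (X ω) - t) * R.indicator (fun _ => (1 : ℝ)) (X ω)) μ := by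
  refine Integrable.of_bound
    (((hp.comp hX).sub_const t).mul ((measurable_const.indicator hR).comp hX)).aestronglyMeasurable
    (C + |t|) (ae_of_all _ fun ω => ?_)
  have hind : |R.indicator (fun _ => (1 : ℝ)) (X ω)| ≤ 1 := by
    by_cases h : X ω ∈ R <;> simp [h]
  calc ‖(p (X ω) - t) * R.indicator (fun _ => (1 : ℝ)) (X ω)‖
      = |p (X ω) - t| * |R.indicator (fun _ => (1 : ℝ)) (X ω)| := abs_mul _ _
    _ ≤ |p (X ω) - t| := mul_le_of_le_one_right (abs_nonneg _) hind
    _ ≤ C + |t| := (abs_sub _ _).trans (add_le_add_left (hpC _) _)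

theorem thresholdGain_regret_nonneg_and_le [IsFiniteMeasure μ] (hX : Measurable X)
    (hp : Measurable p) {C : ℝ} (hpC : ∀ x, |p x| ≤ C) {q : 𝒳 → ℝ} (hq : Measurable q)
    {δ : ℝ} (hδ : ∀ x, |p x - q x| ≤ δ) :
    0 ≤ thresholdGain μ X p t {x | p x > t} - thresholdGain μ X p t {x | q x > t} ∧
    thresholdGain μ X p t {x | p x > t} - thresholdGain μ X p t {x | q x > t} ≤
      δ * (μ {ω | t - δ ≤ p (X ω) ∧ p (X ω) ≤ t + δ}).toReal := by
  set S : Set Ω := {ω | t - δ ≤ p (X ω) ∧ p (X ω) ≤ t + δ}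
  have hS : MeasurableSet S := (hp.comp hX) measurableSet_Icc
  have hRp : MeasurableSet {x | p x > t} := measurableSet_lt measurable_const hp
  have hRq : MeasurableSet {x | q x > t} := measurableSet_lt measurable_const hq
  have hint_p := integrable_sub_mul_indicator (μ := μ) t hX hp hpC hRp
  have hint_q := integrable_sub_mul_indicator (μ := μ) t hX hp hpC hRq
  have hpointwise := fun ω => sub_mul_indicator_regret_nonneg_and_le (t := t) (X ω) (hδ (X ω))
  unfold thresholdGain
  rw [← integral_sub hint_p hint_q]
  refine ⟨integral_nonneg fun ω => (hpointwise ω).1, ?_⟩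
  calc _ ≤ ∫ ω, S.indicator (fun _ => δ) ω ∂μ :=
        integral_mono (hint_p.sub hint_q) ((integrable_const δ).indicator hS)
          fun ω => (hpointwise ω).2
    _ = δ * (μ S).toReal := by
        rw [integral_indicator_const δ hS, smul_eq_mul, mul_comm, measureReal_def]

end ThresholdGain

theorem plugin_regret_bound_general
    {𝒳 Ω : Type*} [MeasurableSpace 𝒳] [MeasurableSpace Ω]
    (μ : Measure Ω) [IsProbabilityMeasure μ] (X : Ω → 𝒳) (hX : Measurable X)
    (p phat : 𝒳 → ℝ) (hp : Measurable p) (hphat : Measurable phat)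
    (hp01 : ∀ x, p x ∈ Set.Icc (0 : ℝ) 1)
    (τ : ℝ)
    (δ : ℝ) (hδ : δ = ⨆ x, |p x - phat x|)
    (hbdd : BddAbove (Set.range fun x => |p x - phat x|))
    (γ : Set 𝒳 → ℝ)
    (hγ : ∀ R : Set 𝒳, γ R = (∫ ω, (1 - τ) * (1 - p (X ω)) ∂μ)
        + ∫ ω, (p (X ω) - (1 - τ)) * Set.indicator R (fun _ => (1 : ℝ)) (X ω) ∂μ) :
    0 ≤ γ {x | p x > 1 - τ} - γ {x | phat x > 1 - τ} ∧
    γ {x | p x > 1 - τ} - γ {x | phat x > 1 - τ} ≤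
      δ * (μ {ω | 1 - τ - δ ≤ p (X ω) ∧ p (X ω) ≤ 1 - τ + δ}).toReal := by
  have hpC : ∀ x, |p x| ≤ 1 := fun x => abs_le.2 ⟨by linarith [(hp01 x).1], (hp01 x).2⟩
  have hδx : ∀ x, |p x - phat x| ≤ δ := fun x => hδ ▸ le_ciSup hbdd x
  have hγ_sub : γ {x | p x > 1 - τ} - γ {x | phat x > 1 - τ} =
      thresholdGain μ X p (1 - τ) {x | p x > 1 - τ} -
        thresholdGain μ X p (1 - τ) {x | phat x > 1 - τ} := by
    rw [hγ, hγ, thresholdGain, thresholdGain]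
    ring
  rw [hγ_sub]
  exact thresholdGain_regret_nonneg_and_le (1 - τ) hX hp hpC hphat hδx

/-- Plug-in regret bound: `0 ≤ γ(τ,p,R*) − γ(τ,p,R̂) ≤ δ · P(1−τ−δ ≤ p(X) ≤ 1−τ+δ)`
where `R* = {p > 1−τ}`, `R̂ = {p̂ > 1−τ}` and `δ = sup_x |p(x) − p̂(x)|`. -/
theorem plugin_regret_bound
    {𝒳 Ω : Type*} [MeasurableSpace 𝒳] [MeasurableSpace Ω]
    (μ : Measure Ω) [IsProbabilityMeasure μ] (X : Ω → 𝒳) (hX : Measurable X)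
    (p phat : 𝒳 → ℝ) (hp : Measurable p) (hphat : Measurable phat)
    (hp01 : ∀ x, p x ∈ Set.Icc (0 : ℝ) 1) (hphat01 : ∀ x, phat x ∈ Set.Icc (0 : ℝ) 1)
    (τ : ℝ) (hτ : τ ∈ Set.Ioo (0 : ℝ) 1)
    (δ : ℝ) (hδ : δ = ⨆ x, |p x - phat x|)
    (hbdd : BddAbove (Set.range fun x => |p x - phat x|))
    (γ : Set 𝒳 → ℝ)
    (hγ : ∀ R : Set 𝒳, γ R = (∫ ω, (1 - τ) * (1 - p (X ω)) ∂μ)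
        + ∫ ω, (p (X ω) - (1 - τ)) * Set.indicator R (fun _ => (1 : ℝ)) (X ω) ∂μ) :
    0 ≤ γ {x | p x > 1 - τ} - γ {x | phat x > 1 - τ} ∧
    γ {x | p x > 1 - τ} - γ {x | phat x > 1 - τ} ≤
      δ * (μ {ω | 1 - τ - δ ≤ p (X ω) ∧ p (X ω) ≤ 1 - τ + δ}).toReal :=
  plugin_regret_bound_general μ X hX p phat hp hphat hp01 τ δ hδ hbdd γ hγ
end

section
/- If the distribution of p(X) has density bounded by C in a neighborhood of 1−τ (i.e. P(1−τ − t ≤ p(X) ≤ 1−τ + t) ≤ 2Ct for all small t > 0), and sup_x |p̂(x) − p(x)| ≤ δ, then the plug-in regret satisfies γ(τ, p, R*) − γ(τ, p, R̂) ≤ 2C δ², where R* = {p > 1−τ} and R̂ = {p̂ > 1−τ}. -/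
/-!
Write `c = 1 - τ`. The regret is `E[(p(X) - c)(1_{R*} - 1_{R̂})(X)]`. The integrand vanishes unless
`p(X)` and `p̂(X)` lie on different sides of `c`; since they are `δ`-close, this forces
`|p(X) - c| ≤ δ`, and there the integrand is at most `|p(X) - c|`. Hence the regret is at
most `δ · P(|p(X) - c| ≤ δ) ≤ δ · 2Cδ`.
-/

open MeasureTheory

theorem sub_mul_ite_sub_ite_le {a b c δ : ℝ} (h : |b - a| ≤ δ) :
    (a - c) * ((if c < a then 1 else 0) - (if c < b then 1 else 0)) ≤
      if c - δ ≤ a ∧ a ≤ c + δ then δ else 0 := by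
  obtain ⟨hlo, hhi⟩ := abs_le.mp h
  have hδ : 0 ≤ δ := (abs_nonneg _).trans h
  by_cases ha : c < a <;> by_cases hb : c < b <;> simp only [ha, hb, if_true, if_false] <;>
    split_ifs with hA <;> first | linarith | exact absurd ⟨by linarith, by linarith⟩ hA

section

variable {Ω : Type*} [MeasurableSpace Ω] {μ : Measure Ω} [IsFiniteMeasure μ]

theorem integrable_sub_mul_indicator_s7 {f : Ω → ℝ} (hf : Integrable f μ) (c : ℝ) {S : Set Ω}
    (hS : MeasurableSet S) :
    Integrable (fun ω => (f ω - c) * S.indicator (fun _ => (1 : ℝ)) ω) μ := by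
  refine ((hf.sub (integrable_const c)).indicator hS).congr (ae_of_all _ fun ω => ?_)
  by_cases hω : ω ∈ S <;> simp [hω]

theorem integral_sub_mul_indicator_sub_le {f g : Ω → ℝ} {c δ : ℝ} (hf : Integrable f μ)
    (hf_meas : Measurable f) (hg_meas : Measurable g) (hfg : ∀ ω, |g ω - f ω| ≤ δ) :
    ∫ ω, (f ω - c) * {ω | c < f ω}.indicator (fun _ => (1 : ℝ)) ω ∂μ
        - ∫ ω, (f ω - c) * {ω | c < g ω}.indicator (fun _ => (1 : ℝ)) ω ∂μ
      ≤ δ * μ.real {ω | c - δ ≤ f ω ∧ f ω ≤ c + δ} := by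
  have hA : MeasurableSet {ω | c - δ ≤ f ω ∧ f ω ≤ c + δ} :=
    (measurableSet_le measurable_const hf_meas).inter (measurableSet_le hf_meas measurable_const)
  have hf_int :=
    integrable_sub_mul_indicator_s7 hf c (measurableSet_lt (measurable_const (a := c)) hf_meas)
  have hg_int :=
    integrable_sub_mul_indicator_s7 hf c (measurableSet_lt (measurable_const (a := c)) hg_meas)
  rw [← integral_sub hf_int hg_int, mul_comm, ← smul_eq_mul, ← integral_indicator_const δ hA]
  refine integral_mono (hf_int.sub hg_int) ((integrable_const δ).indicator hA) fun ω => ?_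
  simpa only [Set.indicator_apply, Set.mem_ofPred_eq, mul_sub] using
    sub_mul_ite_sub_ite_le (c := c) (hfg ω)

end

theorem plugin_regret_quadratic_bound_general
    {𝒳 Ω : Type*} [MeasurableSpace 𝒳] [MeasurableSpace Ω]
    (μ : Measure Ω) [IsProbabilityMeasure μ] (X : Ω → 𝒳) (hX : Measurable X)
    (p phat : 𝒳 → ℝ) (hp : Measurable p) (hphat : Measurable phat)
    (hp01 : ∀ x, p x ∈ Set.Icc (0 : ℝ) 1)
    (τ : ℝ)
    (C δ : ℝ) (hδ0 : 0 ≤ δ)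
    (hdens : ∀ t : ℝ, 0 < t → t ≤ δ →
      (μ {ω | 1 - τ - t ≤ p (X ω) ∧ p (X ω) ≤ 1 - τ + t}).toReal ≤ 2 * C * t)
    (hsup : ∀ x, |phat x - p x| ≤ δ)
    (γ : Set 𝒳 → ℝ)
    (hγ : ∀ R : Set 𝒳, γ R = (∫ ω, (1 - τ) * (1 - p (X ω)) ∂μ)
        + ∫ ω, (p (X ω) - (1 - τ)) * Set.indicator R (fun _ => (1 : ℝ)) (X ω) ∂μ) :
    γ {x | p x > 1 - τ} - γ {x | phat x > 1 - τ} ≤ 2 * C * δ ^ 2 := by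
  have hpX : Integrable (fun ω => p (X ω)) μ :=
    .of_bound (hp.comp hX).aestronglyMeasurable 1 (ae_of_all _ fun ω =>
      abs_le.mpr ⟨by linarith [(hp01 (X ω)).1], (hp01 (X ω)).2⟩)
  have hmargin :
      δ * μ.real {ω | 1 - τ - δ ≤ p (X ω) ∧ p (X ω) ≤ 1 - τ + δ} ≤ δ * (2 * C * δ) := by
    rcases hδ0.eq_or_lt with rfl | hδ
    · simp
    · exact mul_le_mul_of_nonneg_left (hdens δ hδ le_rfl) hδ0
  calc γ {x | p x > 1 - τ} - γ {x | phat x > 1 - τ}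
      ≤ δ * μ.real {ω | 1 - τ - δ ≤ p (X ω) ∧ p (X ω) ≤ 1 - τ + δ} := by
        rw [hγ, hγ, add_sub_add_left_eq_sub]
        exact integral_sub_mul_indicator_sub_le hpX (hp.comp hX) (hphat.comp hX) (hsup <| X ·)
    _ ≤ 2 * C * δ ^ 2 := by linarith

/-- Quadratic plug-in regret bound under a margin (bounded density) condition:
if `P(1−τ−t ≤ p(X) ≤ 1−τ+t) ≤ 2Ct` for all small `t > 0` and `sup_x |p̂(x)−p(x)| ≤ δ`,
then `γ(τ,p,R*) − γ(τ,p,R̂) ≤ 2Cδ²`. -/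
theorem plugin_regret_quadratic_bound
    {𝒳 Ω : Type*} [MeasurableSpace 𝒳] [MeasurableSpace Ω]
    (μ : Measure Ω) [IsProbabilityMeasure μ] (X : Ω → 𝒳) (hX : Measurable X)
    (p phat : 𝒳 → ℝ) (hp : Measurable p) (hphat : Measurable phat)
    (hp01 : ∀ x, p x ∈ Set.Icc (0 : ℝ) 1) (hphat01 : ∀ x, phat x ∈ Set.Icc (0 : ℝ) 1)
    (τ : ℝ) (hτ : τ ∈ Set.Ioo (0 : ℝ) 1)
    (C δ : ℝ) (hC : 0 < C) (hδ0 : 0 ≤ δ)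
    (hdens : ∀ t : ℝ, 0 < t → t ≤ δ →
      (μ {ω | 1 - τ - t ≤ p (X ω) ∧ p (X ω) ≤ 1 - τ + t}).toReal ≤ 2 * C * t)
    (hsup : ∀ x, |phat x - p x| ≤ δ)
    (γ : Set 𝒳 → ℝ)
    (hγ : ∀ R : Set 𝒳, γ R = (∫ ω, (1 - τ) * (1 - p (X ω)) ∂μ)
        + ∫ ω, (p (X ω) - (1 - τ)) * Set.indicator R (fun _ => (1 : ℝ)) (X ω) ∂μ) :
    γ {x | p x > 1 - τ} - γ {x | phat x > 1 - τ} ≤ 2 * C * δ ^ 2 :=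
  plugin_regret_quadratic_bound_general μ X hX p phat hp hphat hp01 τ C δ hδ0 hdens hsup γ hγ
end
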